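/- arXiv:2605.29147 — 4 statements merged into one kernel-verified Lean document; each statement's English description precedes it below -/
import Mathlib

section
/- Let R be a commutative ring, r ≥ 2, λ ∈ R, let J = J_r(λ) ∈ Mat_{r×r}(R) be the Jordan block with eigenvalue λ, and let T ∈ Mat_{r×r}(R) commute with J. Then I_T ⊆ I_J as ideals of R[z₁,…,z_r]. Moreover, if R is a field and T = p(J) for a polynomial p ∈ R[t] with p'(λ) ≠ 0, then I_T = I_J. -/
/-!
Index the variables from `0` and put `z_n = 0` for `n ≥ r` (`extendZero X`). A matrix `T`
commuting with `J = J_r(λ)` commutes with the shift `N = J - λ`, so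
`(T z)_i = (N^i T z)_0 = (T N^i z)_0 = ∑ₖ tₖ z_{i+k}` with `tₖ = T₀ₖ`. Hence the generator of `I_J`
for `(a, b)` is the quadric `q(a, b) = z_a z_{b+1} - z_b z_{a+1}`, and that of `I_T` is
`∑ₖ tₖ (z_a z_{b+k} - z_b z_{a+k})`, where each bracket telescopes into quadrics `q(a', b')` with
`a' + b' = a + b + k - 1`; so `I_T ⊆ I_J`. Conversely, if `t₁` is a unit then `q(a, b)` is `t₁⁻¹`
times the generator of `I_T` modulo quadrics with larger index sum, and descending induction on
`a + b` gives `I_J ⊆ I_T`. For `T = p(J)`, `t₁ = p'(λ)` by Taylor expansion of `p` at `λ`.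
-/

open MvPolynomial

/-- The ideal `I_M` of `R[z₁,…,z_r]` generated by `∑ₖ z_k (M_{jk} z_i − M_{ik} z_j)`
for all pairs `i < j`. -/
noncomputable def higgsIdeal {R : Type*} [CommRing R] {r : ℕ}
    (M : Matrix (Fin r) (Fin r) R) : Ideal (MvPolynomial (Fin r) R) :=
  Ideal.span { p | ∃ i j : Fin r, i < j ∧
    p = ∑ k : Fin r, X k * (C (M j k) * X i - C (M i k) * X j) }

/-- The `r×r` Jordan block with eigenvalue `lam`. -/
def jordanBlock (R : Type*) [CommRing R] (r : ℕ) (lam : R) : Matrix (Fin r) (Fin r) R :=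
  Matrix.of fun i j => if (i : ℕ) = (j : ℕ) then lam
    else if (j : ℕ) = (i : ℕ) + 1 then 1 else 0

open Finset Matrix

section extendZero

variable {A : Type*} {r : ℕ}

def extendZero [Zero A] (v : Fin r → A) (n : ℕ) : A :=
  if h : n < r then v ⟨n, h⟩ else 0

lemma extendZero_val [Zero A] (v : Fin r → A) (i : Fin r) : extendZero v i = v i :=
  dif_pos i.isLt

lemma extendZero_of_le [Zero A] (v : Fin r → A) {n : ℕ} (h : r ≤ n) : extendZero v n = 0 :=
  dif_neg (by omega)

lemma sum_ite_val_eq_extendZero [AddCommMonoid A] (v : Fin r → A) (n : ℕ) :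
    ∑ k : Fin r, (if (k : ℕ) = n then v k else 0) = extendZero v n := by
  by_cases h : n < r
  · have hk (k : Fin r) : (k : ℕ) = n ↔ k = ⟨n, h⟩ := by simp [Fin.ext_iff]
    simp only [hk, sum_ite_eq', mem_univ, if_true, extendZero, dif_pos h]
  · rw [extendZero_of_le v (not_lt.mp h)]
    exact sum_eq_zero fun k _ => if_neg (by omega)

end extendZero

section jordanBlock

variable {R : Type*} [CommRing R] {r : ℕ}

lemma jordanBlock_map {S : Type*} [CommRing S] (f : R →+* S) (lam : R) :
    (jordanBlock R r lam).map f = jordanBlock S r (f lam) := by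
  ext i j
  simp only [jordanBlock, map_apply, of_apply]
  split_ifs <;> simp

lemma jordanBlock_eq_add_algebraMap (lam : R) :
    jordanBlock R r lam = jordanBlock R r 0 + algebraMap R _ lam := by
  ext i j
  simp only [jordanBlock, Matrix.add_apply, of_apply, algebraMap_eq_diagonal, diagonal_apply,
    Pi.algebraMap_apply, Algebra.algebraMap_self, RingHom.id_apply, Fin.ext_iff]
  split_ifs <;> simp

lemma Commute.jordanBlock_zero {T : Matrix (Fin r) (Fin r) R} {lam : R}
    (hT : Commute T (jordanBlock R r lam)) : Commute T (jordanBlock R r 0) := by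
  rw [jordanBlock_eq_add_algebraMap] at hT
  simpa using hT.sub_right (Algebra.commute_algebraMap_right lam T)

lemma jordanBlock_zero_pow_apply (k : ℕ) (i j : Fin r) :
    (jordanBlock R r 0 ^ k) i j = if (j : ℕ) = i + k then 1 else 0 := by
  induction k generalizing j with
  | zero => simp [one_apply, Fin.ext_iff, eq_comm]
  | succ k ih =>
    rw [pow_succ, mul_apply]
    simp only [ih, ite_mul, one_mul, zero_mul]
    rw [sum_ite_val_eq_extendZero (fun l => jordanBlock R r 0 l j)]
    by_cases h : i + k < r
    · simp only [extendZero, dif_pos h, jordanBlock, of_apply]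
      split_ifs <;> first | rfl | omega
    · rw [extendZero_of_le _ (by omega), if_neg (by omega)]

lemma jordanBlock_zero_pow_mulVec (k : ℕ) (v : Fin r → R) (i : Fin r) :
    (jordanBlock R r 0 ^ k *ᵥ v) i = extendZero v (i + k) := by
  simp only [mulVec, dotProduct, jordanBlock_zero_pow_apply, ite_mul, one_mul, zero_mul,
    sum_ite_val_eq_extendZero]

lemma jordanBlock_mulVec (lam : R) (v : Fin r → R) (i : Fin r) :
    (jordanBlock R r lam *ᵥ v) i = lam * v i + extendZero v (i + 1) := by
  rw [jordanBlock_eq_add_algebraMap, add_mulVec, ← pow_one (jordanBlock R r 0), Pi.add_apply,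
    jordanBlock_zero_pow_mulVec, algebraMap_eq_diagonal, mulVec_diagonal, add_comm]
  rfl

lemma mulVec_apply_of_commute {T : Matrix (Fin r) (Fin r) R}
    (hT : Commute T (jordanBlock R r 0)) (v : Fin r → R) (i : Fin r) :
    (T *ᵥ v) i = ∑ k, T ⟨0, i.pos⟩ k * extendZero v (k + i) := calc
  (T *ᵥ v) i = (jordanBlock R r 0 ^ (i : ℕ) *ᵥ T *ᵥ v) ⟨0, i.pos⟩ := by
    rw [jordanBlock_zero_pow_mulVec, zero_add, extendZero_val]
  _ = (T *ᵥ jordanBlock R r 0 ^ (i : ℕ) *ᵥ v) ⟨0, i.pos⟩ := by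
    rw [mulVec_mulVec, mulVec_mulVec, (hT.pow_right _).eq]
  _ = ∑ k, T ⟨0, i.pos⟩ k * extendZero v (k + i) := by
    simp only [mulVec, dotProduct, ← jordanBlock_zero_pow_mulVec]

lemma aeval_jordanBlock_zero_apply (q : Polynomial R) (i j : Fin r) :
    Polynomial.aeval (jordanBlock R r 0) q i j = if (i : ℕ) ≤ j then q.coeff (j - i) else 0 := by
  induction q using Polynomial.induction_on' with
  | add p q hp hq =>
    simp only [map_add, Matrix.add_apply, hp, hq, Polynomial.coeff_add]
    split_ifs <;> simp
  | monomial k a =>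
    rw [Polynomial.aeval_monomial, ← Algebra.smul_def]
    simp only [Matrix.smul_apply, jordanBlock_zero_pow_apply, Polynomial.coeff_monomial,
      smul_eq_mul]
    split_ifs <;> first | omega | simp

lemma aeval_jordanBlock_apply (lam : R) (p : Polynomial R) (i j : Fin r) :
    Polynomial.aeval (jordanBlock R r lam) p i j =
      if (i : ℕ) ≤ j then (Polynomial.taylor lam p).coeff (j - i) else 0 := by
  rw [← aeval_jordanBlock_zero_apply, Polynomial.taylor_apply, Polynomial.aeval_comp,
    jordanBlock_eq_add_algebraMap]
  simp

end jordanBlock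

section quadric

variable {A : Type*} [CommRing A]

def quadric (z : ℕ → A) (a b : ℕ) : A :=
  z a * z (b + 1) - z b * z (a + 1)

lemma quadric_swap (z : ℕ → A) (a b : ℕ) : quadric z b a = -quadric z a b := by
  simp only [quadric]; ring

lemma quadric_self (z : ℕ → A) (a : ℕ) : quadric z a a = 0 := by
  simp only [quadric]; ring

lemma mul_sub_mul_eq_sum_quadric (z : ℕ → A) (i j k : ℕ) :
    z i * z (k + j) - z j * z (k + i) = ∑ l ∈ range k, quadric z (i + l) (k - 1 - l + j) := by
  have hterm : ∀ l ∈ range k, quadric z (i + l) (k - 1 - l + j) =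
      z (i + l) * z (k - l + j) - z (i + (l + 1)) * z (k - (l + 1) + j) := by
    intro l hl
    rw [mem_range] at hl
    rw [quadric, show k - 1 - l + j + 1 = k - l + j by omega,
      show k - (l + 1) + j = k - 1 - l + j by omega, ← add_assoc]
    ring
  rw [sum_congr rfl hterm, sum_range_sub' (fun l => z (i + l) * z (k - l + j))]
  simp only [add_zero, Nat.sub_zero, Nat.sub_self, zero_add]
  ring_nf

variable {r : ℕ}

lemma quadric_extendZero_of_le_left (v : Fin r → A) {a : ℕ} (b : ℕ) (ha : r ≤ a) :
    quadric (extendZero v) a b = 0 := by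
  simp [quadric, extendZero_of_le v ha, extendZero_of_le v (Nat.le_succ_of_le ha)]

lemma quadric_extendZero_mem_of_lt {I : Ideal A} (v : Fin r → A) (s : ℕ)
    (h : ∀ a b, a < b → b < r → a + b = s → quadric (extendZero v) a b ∈ I) (a b : ℕ)
    (hs : a + b = s) : quadric (extendZero v) a b ∈ I := by
  rcases lt_trichotomy a b with hab | rfl | hba
  · by_cases hb : b < r
    · exact h a b hab hb hs
    · rw [quadric_swap, quadric_extendZero_of_le_left v a (not_lt.mp hb), neg_zero]
      exact I.zero_mem
  · rw [quadric_self]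
    exact I.zero_mem
  · by_cases ha : a < r
    · rw [quadric_swap]
      exact I.neg_mem (h b a hba ha (by omega))
    · rw [quadric_extendZero_of_le_left v b (not_lt.mp ha)]
      exact I.zero_mem

end quadric

section higgsIdeal

variable {R : Type*} [CommRing R] {r : ℕ}

noncomputable def higgsGenerator (M : Matrix (Fin r) (Fin r) R) (i j : Fin r) :
    MvPolynomial (Fin r) R :=
  X i * (M.map C *ᵥ X) j - X j * (M.map C *ᵥ X) i

lemma higgsIdeal_eq_span (M : Matrix (Fin r) (Fin r) R) :
    higgsIdeal M = Ideal.span {p | ∃ i j, i < j ∧ p = higgsGenerator M i j} := by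
  have hgen (i j : Fin r) : ∑ k, X k * (C (M j k) * X i - C (M i k) * X j) =
      higgsGenerator M i j := by
    simp only [higgsGenerator, mulVec, dotProduct, map_apply, mul_sum, ← sum_sub_distrib]
    exact sum_congr rfl fun k _ => by ring
  simp only [higgsIdeal, hgen]

lemma higgsGenerator_mem_higgsIdeal (M : Matrix (Fin r) (Fin r) R) {i j : Fin r} (hij : i < j) :
    higgsGenerator M i j ∈ higgsIdeal M := by
  rw [higgsIdeal_eq_span]
  exact Ideal.subset_span ⟨i, j, hij, rfl⟩

lemma higgsIdeal_le_iff (M : Matrix (Fin r) (Fin r) R) (I : Ideal (MvPolynomial (Fin r) R)) :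
    higgsIdeal M ≤ I ↔ ∀ i j, i < j → higgsGenerator M i j ∈ I := by
  simp only [higgsIdeal_eq_span, Ideal.span_le, Set.subset_def, Set.mem_ofPred_eq,
    SetLike.mem_coe]
  exact ⟨fun h i j hij => h _ ⟨i, j, hij, rfl⟩, fun h p ⟨i, j, hij, hp⟩ => hp ▸ h i j hij⟩

lemma higgsGenerator_jordanBlock (lam : R) (i j : Fin r) :
    higgsGenerator (jordanBlock R r lam) i j = quadric (extendZero X) i j := by
  rw [higgsGenerator, quadric, jordanBlock_map, jordanBlock_mulVec, jordanBlock_mulVec,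
    extendZero_val, extendZero_val]
  ring

lemma higgsGenerator_eq_sum_quadric {T : Matrix (Fin r) (Fin r) R}
    (hT : Commute T (jordanBlock R r 0)) (i j : Fin r) :
    higgsGenerator T i j =
      ∑ k, C (T ⟨0, i.pos⟩ k) * ∑ l ∈ range k, quadric (extendZero X) (i + l) (k - 1 - l + j) := by
  have hT' : Commute (T.map C) (jordanBlock (MvPolynomial (Fin r) R) r 0) := by
    simpa [jordanBlock_map] using hT.map (RingHom.mapMatrix (C : R →+* MvPolynomial (Fin r) R))
  simp only [higgsGenerator, mulVec_apply_of_commute hT', ← mul_sub_mul_eq_sum_quadric,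
    map_apply, ← extendZero_val X i, ← extendZero_val X j, mul_sum, ← sum_sub_distrib]
  exact sum_congr rfl fun k _ => by ring

end higgsIdeal

section commute_jordanBlock

variable {R : Type*} [CommRing R] {r : ℕ}

lemma quadric_mem_higgsIdeal_jordanBlock (lam : R) (a b : ℕ) :
    quadric (extendZero X) a b ∈ higgsIdeal (jordanBlock R r lam) := by
  refine quadric_extendZero_mem_of_lt X (a + b) (fun a b hab hb _ => ?_) a b rfl
  have hgen := higgsGenerator_mem_higgsIdeal (jordanBlock R r lam)
    (i := ⟨a, hab.trans hb⟩) (j := ⟨b, hb⟩) hab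
  rwa [higgsGenerator_jordanBlock] at hgen

theorem higgsIdeal_le_jordanBlock_of_commute {T : Matrix (Fin r) (Fin r) R} {lam : R}
    (hT : Commute T (jordanBlock R r lam)) : higgsIdeal T ≤ higgsIdeal (jordanBlock R r lam) := by
  refine (higgsIdeal_le_iff T _).mpr fun i j _ => ?_
  rw [higgsGenerator_eq_sum_quadric hT.jordanBlock_zero]
  exact Ideal.sum_mem _ fun k _ => Ideal.mul_mem_left _ _ <|
    Ideal.sum_mem _ fun l _ => quadric_mem_higgsIdeal_jordanBlock lam _ _

variable {T : Matrix (Fin r) (Fin r) R}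

lemma quadric_mem_higgsIdeal_of_forall_add_lt (hT : Commute T (jordanBlock R r 0)) (hr : 1 < r)
    (ht : IsUnit (T ⟨0, by omega⟩ ⟨1, hr⟩)) {a b : ℕ} (hab : a < b) (hb : b < r)
    (h : ∀ a' b', a + b < a' + b' → quadric (extendZero X) a' b' ∈ higgsIdeal T) :
    quadric (extendZero X) a b ∈ higgsIdeal T := by
  have hgen := higgsGenerator_mem_higgsIdeal T (i := ⟨a, hab.trans hb⟩) (j := ⟨b, hb⟩) hab
  rw [higgsGenerator_eq_sum_quadric hT, ← add_sum_erase _ _ (mem_univ ⟨1, hr⟩)] at hgen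
  have hrest : ∑ k ∈ univ.erase ⟨1, hr⟩, C (T ⟨0, by omega⟩ k) *
      ∑ l ∈ range k, quadric (extendZero X) (a + l) (k - 1 - l + b) ∈ higgsIdeal T := by
    refine Ideal.sum_mem _ fun k hk => Ideal.mul_mem_left _ _ <| Ideal.sum_mem _ fun l hl => ?_
    simp only [mem_erase, ne_eq, Fin.ext_iff] at hk
    rw [mem_range] at hl
    exact h _ _ (by omega)
  have h1 := (Ideal.add_mem_iff_left _ hrest).mp hgen
  simp only [sum_range_one, add_zero, Nat.sub_self, zero_add] at h1
  exact (Ideal.unit_mul_mem_iff_mem _ (ht.map C)).mp h1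

lemma quadric_mem_higgsIdeal_of_isUnit (hT : Commute T (jordanBlock R r 0)) (hr : 1 < r)
    (ht : IsUnit (T ⟨0, by omega⟩ ⟨1, hr⟩)) (a b : ℕ) :
    quadric (extendZero X) a b ∈ higgsIdeal T := by
  suffices ∀ n s, 2 * r - s = n → ∀ a b, a + b = s → quadric (extendZero X) a b ∈ higgsIdeal T from
    this _ _ rfl a b rfl
  intro n
  induction n using Nat.strong_induction_on with
  | _ n ih =>
    intro s hs
    refine quadric_extendZero_mem_of_lt X s fun a b hab hb hab_s => ?_
    exact quadric_mem_higgsIdeal_of_forall_add_lt hT hr ht hab hb fun a' b' hlt =>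
      ih _ (by omega) _ rfl a' b' rfl

end commute_jordanBlock

/-- Lemma 4.3: if `T` commutes with the Jordan block `J = J_r(λ)` then `I_T ⊆ I_J`;
moreover if `R` is a field and `T = p(J)` with `p'(λ) ≠ 0` then `I_T = I_J`. -/
theorem stmt8 :
    (∀ (R : Type) [CommRing R] (r : ℕ), 2 ≤ r → ∀ (lam : R)
      (T : Matrix (Fin r) (Fin r) R), Commute T (jordanBlock R r lam) →
      higgsIdeal T ≤ higgsIdeal (jordanBlock R r lam)) ∧
    (∀ (K : Type) [Field K] (r : ℕ), 2 ≤ r → ∀ (lam : K) (p : Polynomial K),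
      (Polynomial.derivative p).eval lam ≠ 0 →
      higgsIdeal (Polynomial.aeval (jordanBlock K r lam) p)
        = higgsIdeal (jordanBlock K r lam)) := by
  refine ⟨fun R _ r _ lam T hT => higgsIdeal_le_jordanBlock_of_commute hT,
    fun K _ r hr lam p hp => ?_⟩
  set J := jordanBlock K r lam
  have hT : Commute (Polynomial.aeval J p) J := by
    simpa using (Commute.all p Polynomial.X).map (Polynomial.aeval J)
  have ht : Polynomial.aeval J p ⟨0, by omega⟩ ⟨1, hr⟩ = (Polynomial.derivative p).eval lam := by
    simp [J, aeval_jordanBlock_apply, Polynomial.taylor_coeff_one]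
  refine le_antisymm (higgsIdeal_le_jordanBlock_of_commute hT) <|
    (higgsIdeal_le_iff _ _).mpr fun i j _ => ?_
  rw [higgsGenerator_jordanBlock]
  exact quadric_mem_higgsIdeal_of_isUnit hT.jordanBlock_zero hr (ht ▸ hp.isUnit) i j
end

section
/- Let R be an integral domain and let U, V ∈ Mat_{2×2}(R) be two nonzero commuting matrices with U₁₁ = V₁₁ = 0. Then there exist nonzero elements u, v ∈ R such that v·U = u·V. Moreover, if det V ≠ 0 then det U ≠ 0. -/
/-!
For `2×2` matrices with vanishing `(1,1)`-entry, the entries of `U * V = V * U` say exactly that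
the `2×2` minors of the entry vectors `(U₁₂, U₂₁, U₂₂)` and `(V₁₂, V₂₁, V₂₂)` vanish, so over a
domain the two vectors are proportional; taking determinants gives `v² det U = u² det V`.
-/

open Matrix

theorem Matrix.exists_smul_eq_smul_of_mul_eq_mul {m n R : Type*} [CommMonoidWithZero R]
    [NoZeroDivisors R] {A B : Matrix m n R} (hA : A ≠ 0) (hB : B ≠ 0)
    (h : ∀ i j k l, A i j * B k l = A k l * B i j) :
    ∃ u v : R, u ≠ 0 ∧ v ≠ 0 ∧ v • A = u • B := by
  obtain ⟨i, j, hij⟩ : ∃ i j, A i j ≠ 0 := by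
    by_contra! h0
    exact hA (Matrix.ext h0)
  refine ⟨A i j, B i j, hij, fun hB0 => hB (Matrix.ext fun k l => ?_), Matrix.ext fun k l => ?_⟩
  · simpa [hB0, hij] using h i j k l
  · simp [smul_eq_mul, mul_comm (B i j), h]

theorem Matrix.det_ne_zero_of_smul_eq_smul {n R : Type*} [Fintype n] [DecidableEq n]
    [CommRing R] [NoZeroDivisors R] {A B : Matrix n n R} {u v : R} (hu : u ≠ 0)
    (h : v • A = u • B) (hB : B.det ≠ 0) : A.det ≠ 0 := by
  intro hA
  have hdet := congrArg Matrix.det h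
  rw [det_smul, det_smul, hA, mul_zero] at hdet
  exact mul_ne_zero (pow_ne_zero _ hu) hB hdet.symm

theorem Matrix.mul_eq_mul_of_commute_of_apply_zero_zero {R : Type*} [CommRing R]
    {U V : Matrix (Fin 2) (Fin 2) R} (hUV : Commute U V) (hU : U 0 0 = 0) (hV : V 0 0 = 0) :
    ∀ i j k l, U i j * V k l = U k l * V i j := by
  have h := hUV.eq
  have e00 := congrFun (congrFun h 0) 0
  have e01 := congrFun (congrFun h 0) 1
  have e10 := congrFun (congrFun h 1) 0
  simp only [mul_apply, Fin.sum_univ_two, hU, hV, zero_mul, mul_zero, zero_add] at e00 e01 e10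
  intro i j k l
  fin_cases i <;> fin_cases j <;> fin_cases k <;> fin_cases l <;> simp [hU, hV] <;> grind

/-- Lemma 5.1: two nonzero commuting `2×2` matrices over a domain with vanishing
`(1,1)`-entries are proportional: `v·U = u·V` for some nonzero `u, v`; moreover
`det V ≠ 0` implies `det U ≠ 0`. -/
theorem stmt11 {R : Type*} [CommRing R] [IsDomain R]
    (U V : Matrix (Fin 2) (Fin 2) R) (hU : U ≠ 0) (hV : V ≠ 0)
    (hUV : Commute U V) (h11U : U 0 0 = 0) (h11V : V 0 0 = 0) :
    (∃ u v : R, u ≠ 0 ∧ v ≠ 0 ∧ v • U = u • V) ∧ (V.det ≠ 0 → U.det ≠ 0) := by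
  obtain ⟨u, v, hu, hv, h⟩ := exists_smul_eq_smul_of_mul_eq_mul hU hV
    (mul_eq_mul_of_commute_of_apply_zero_zero hUV h11U h11V)
  exact ⟨⟨u, v, hu, hv, h⟩, det_ne_zero_of_smul_eq_smul hu h⟩
end

section
/- Let ψ ∈ Mat_{2×2}(ℂ[x]) with ψ₁₁ = 0, ψ₁₂ · ψ₂₁ ≠ 0, and such that every common divisor of ψ₁₂, ψ₂₁, ψ₂₂ in ℂ[x] is a unit. Set Δ = ψ₂₂² + 4 ψ₁₂ ψ₂₁ ∈ ℂ[x] and let f = ψ₁₂ t² + ψ₂₂ t − ψ₂₁ ∈ ℂ[x][t]. Then: (a) the quotient ring ℂ[x][t]/(f) is reduced if and only if Δ ≠ 0; (b) the quotient ring ℂ[x][t]/(f) is an integral domain if and only if Δ is not a square in ℂ[x]. -/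
/-!
Write `f = a t² + b t - c` and `Δ = b² + 4ac`; everything rests on the identity
`(2at + b)² = 4a f + Δ`. If `Δ = 0`, the class of `2at + b` is a nonzero nilpotent of
`R[t]/(f)`. If `Δ ≠ 0` and `q² ∣ f`, then `q` divides `f` and `f' = 2at + b`, hence the
constant `Δ`; so `q` is a constant dividing the primitive `f`, i.e. a unit, and `f` is
squarefree. For the domain part, Gauss's lemma turns irreducibility of the primitive quadratic
`f` into the absence of roots over the fraction field, i.e. into `Δ` not being a square there,
and as `R` is integrally closed this is the same as `Δ` not being a square in `R`.
-/

open Polynomial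

theorem exists_isRoot_quadratic_iff {K : Type*} [Field K] [NeZero (2 : K)] {a b c : K}
    (ha : a ≠ 0) :
    (∃ x, (C a * X ^ 2 + C b * X - C c).IsRoot x) ↔ IsSquare (b ^ 2 + 4 * a * c) := by
  have hdisc : discrim a b (-c) = b ^ 2 + 4 * a * c := by rw [discrim]; ring
  have hroot (x : K) :
      (C a * X ^ 2 + C b * X - C c).IsRoot x ↔ a * (x * x) + b * x + -c = 0 := by
    simp only [IsRoot, eval_sub, eval_add, eval_mul, eval_C, eval_pow, eval_X]
    ring_nf
  simp only [hroot, ← hdisc]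
  exact ⟨fun ⟨x, hx⟩ => ⟨2 * a * x + b, by rw [discrim_eq_sq_of_quadratic_eq_zero hx, sq]⟩,
    fun ⟨s, hs⟩ => exists_quadratic_eq_zero ha ⟨s, hs⟩⟩

theorem IsIntegrallyClosed.isSquare_algebraMap_iff {R K : Type*} [CommRing R] [Field K]
    [Algebra R K] [IsFractionRing R K] [IsIntegrallyClosed R] {d : R} :
    IsSquare (algebraMap R K d) ↔ IsSquare d := by
  refine ⟨fun ⟨s, hs⟩ => ?_, IsSquare.map _⟩
  obtain ⟨y, rfl⟩ := IsIntegrallyClosed.exists_algebraMap_eq_of_isIntegral_pow (R := R)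
    (x := s) two_pos (by rw [sq, ← hs]; exact isIntegral_algebraMap)
  exact ⟨y, IsFractionRing.injective R K (by rw [hs, map_mul])⟩

section Quadratic

variable {R : Type*} [CommRing R]

theorem sq_linear_eq_quadratic (a b c : R) :
    (C (2 * a) * X + C b) ^ 2
      = C (4 * a) * (C a * X ^ 2 + C b * X - C c) + C (b ^ 2 + 4 * a * c) := by
  simp only [C_mul, C_add, C_pow, map_ofNat]
  ring

theorem derivative_quadratic (a b c : R) :
    derivative (C a * X ^ 2 + C b * X - C c) = C (2 * a) * X + C b := by
  simp only [derivative_sub, derivative_add, derivative_C_mul_X_pow, derivative_C_mul_X,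
    derivative_C, C_mul, Nat.cast_ofNat, Nat.add_one_sub_one, pow_one, sub_zero]
  ring

variable {a b c : R}

theorem natDegree_quadratic_sub [Nontrivial R] (ha : a ≠ 0) :
    (C a * X ^ 2 + C b * X - C c).natDegree = 2 := by
  rw [sub_eq_add_neg, ← C_neg]
  exact natDegree_quadratic ha

theorem isPrimitive_quadratic (h : ∀ g : R, g ∣ a → g ∣ c → g ∣ b → IsUnit g) :
    (C a * X ^ 2 + C b * X - C c).IsPrimitive := by
  rw [isPrimitive_iff_isUnit_of_C_dvd]
  intro r hr
  simp only [C_dvd_iff_dvd_coeff] at hr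
  refine h r ?_ ?_ ?_
  · simpa using hr 2
  · simpa using hr 0
  · simpa using hr 1

theorem squarefree_quadratic [IsDomain R] (hprim : (C a * X ^ 2 + C b * X - C c).IsPrimitive)
    (hΔ : b ^ 2 + 4 * a * c ≠ 0) : Squarefree (C a * X ^ 2 + C b * X - C c) := by
  intro q hq
  have hqf : q ∣ C a * X ^ 2 + C b * X - C c := (dvd_mul_right q q).trans hq
  have hqlin : q ∣ C (2 * a) * X + C b := by
    have h := pow_sub_one_dvd_derivative_of_pow_dvd (n := 2)
      (p := C a * X ^ 2 + C b * X - C c) (q := q) (by rwa [sq])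
    simpa only [derivative_quadratic, Nat.reduceSub, pow_one] using h
  have hqΔ : q ∣ C (b ^ 2 + 4 * a * c) := by
    have h := dvd_sub (dvd_pow hqlin two_ne_zero) (hqf.mul_left (C (4 * a)))
    rwa [sq_linear_eq_quadratic a b c, add_sub_cancel_left] at h
  have hq0 : q.natDegree = 0 := by
    simpa only [natDegree_C, nonpos_iff_eq_zero] using natDegree_le_of_dvd hqΔ (C_ne_zero.2 hΔ)
  rw [eq_C_of_natDegree_eq_zero hq0] at hqf ⊢
  exact isUnit_C.2 (isPrimitive_iff_isUnit_of_C_dvd.1 hprim _ hqf)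

variable [IsDomain R] [UniqueFactorizationMonoid R] [NeZero (2 : R)]

theorem isReduced_quotient_quadratic_iff (ha : a ≠ 0)
    (hprim : (C a * X ^ 2 + C b * X - C c).IsPrimitive) :
    IsReduced (R[X] ⧸ Ideal.span {C a * X ^ 2 + C b * X - C c}) ↔ b ^ 2 + 4 * a * c ≠ 0 := by
  refine ⟨fun hred hΔ => ?_, fun hΔ => ?_⟩
  · have hnil : IsNilpotent (Ideal.Quotient.mk (Ideal.span {C a * X ^ 2 + C b * X - C c})
        (C (2 * a) * X + C b)) := by
      refine ⟨2, ?_⟩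
      rw [← map_pow, sq_linear_eq_quadratic a b c, hΔ, C_0, add_zero,
        Ideal.Quotient.eq_zero_iff_mem, Ideal.mem_span_singleton]
      exact dvd_mul_left _ _
    have hdvd := IsReduced.eq_zero _ hnil
    rw [Ideal.Quotient.eq_zero_iff_mem, Ideal.mem_span_singleton] at hdvd
    have hlin : (C (2 * a) * X + C b).natDegree = 1 := natDegree_linear (mul_ne_zero two_ne_zero ha)
    have hle := natDegree_le_of_dvd hdvd (ne_zero_of_natDegree_gt (n := 0) (by omega))
    rw [natDegree_quadratic_sub ha, hlin] at hle
    omega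
  · exact (Ideal.isRadical_iff_quotient_reduced _).mp
      (isRadical_iff_span_singleton.mp (squarefree_quadratic hprim hΔ).isRadical)

theorem isDomain_quotient_quadratic_iff (ha : a ≠ 0)
    (hprim : (C a * X ^ 2 + C b * X - C c).IsPrimitive) :
    IsDomain (R[X] ⧸ Ideal.span {C a * X ^ 2 + C b * X - C c})
      ↔ ¬ IsSquare (b ^ 2 + 4 * a * c) := by
  let K := FractionRing R
  let φ := algebraMap R K
  have hφ : Function.Injective φ := IsFractionRing.injective R K
  have : NeZero (2 : K) := by
    have h := NeZero.of_injective hφ (a := (2 : R))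
    rwa [map_ofNat] at h
  have hφa : φ a ≠ 0 := (map_ne_zero_iff φ hφ).2 ha
  have hmap : (C a * X ^ 2 + C b * X - C c).map φ
      = C (φ a) * X ^ 2 + C (φ b) * X - C (φ c) := by
    simp only [Polynomial.map_sub, Polynomial.map_add, Polynomial.map_mul, map_C,
      Polynomial.map_pow, map_X]
  have hdeg := natDegree_quadratic_sub (b := φ b) (c := φ c) hφa
  have hΔ : φ b ^ 2 + 4 * φ a * φ c = φ (b ^ 2 + 4 * a * c) := by
    simp only [map_add, map_mul, map_pow, map_ofNat]
  rw [Ideal.Quotient.isDomain_iff_prime, Ideal.span_singleton_prime hprim.ne_zero,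
    ← UniqueFactorizationMonoid.irreducible_iff_prime,
    hprim.irreducible_iff_irreducible_map_fraction_map (K := K), hmap,
    irreducible_iff_roots_eq_zero_of_degree_le_three hdeg.ge (hdeg.trans_le (by norm_num)),
    Multiset.eq_zero_iff_forall_notMem]
  simp only [mem_roots (ne_zero_of_natDegree_gt (hdeg ▸ two_pos : 0 < _))]
  rw [← not_exists, exists_isRoot_quadratic_iff hφa, hΔ,
    IsIntegrallyClosed.isSquare_algebraMap_iff]

end Quadratic

theorem stmt14_general (ψ : Matrix (Fin 2) (Fin 2) (Polynomial ℂ))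
    (h1221 : ψ 0 1 * ψ 1 0 ≠ 0)
    (hgcd : ∀ g : Polynomial ℂ, g ∣ ψ 0 1 → g ∣ ψ 1 0 → g ∣ ψ 1 1 → IsUnit g) :
    (IsReduced (Polynomial (Polynomial ℂ) ⧸
        Ideal.span {Polynomial.C (ψ 0 1) * Polynomial.X ^ 2
          + Polynomial.C (ψ 1 1) * Polynomial.X - Polynomial.C (ψ 1 0)})
      ↔ ψ 1 1 ^ 2 + 4 * ψ 0 1 * ψ 1 0 ≠ 0) ∧
    (IsDomain (Polynomial (Polynomial ℂ) ⧸
        Ideal.span {Polynomial.C (ψ 0 1) * Polynomial.X ^ 2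
          + Polynomial.C (ψ 1 1) * Polynomial.X - Polynomial.C (ψ 1 0)})
      ↔ ¬ ∃ δ : Polynomial ℂ, ψ 1 1 ^ 2 + 4 * ψ 0 1 * ψ 1 0 = δ ^ 2) := by
  have ha : ψ 0 1 ≠ 0 := left_ne_zero_of_mul h1221
  have hprim := isPrimitive_quadratic hgcd
  exact ⟨isReduced_quotient_quadratic_iff ha hprim,
    (isDomain_quotient_quadratic_iff ha hprim).trans (isSquare_iff_exists_sq _).not⟩

/-- Proposition 5.3 (algebraic content): for a rank-2 Higgs field
`ψ` over `ℂ[x]` with `ψ₁₁ = 0`, `ψ₁₂ ψ₂₁ ≠ 0` and primitive entries,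
setting `Δ = ψ₂₂² + 4 ψ₁₂ ψ₂₁` and `f = ψ₁₂ t² + ψ₂₂ t − ψ₂₁ ∈ ℂ[x][t]`:
(a) `ℂ[x][t]/(f)` is reduced iff `Δ ≠ 0`;
(b) `ℂ[x][t]/(f)` is an integral domain iff `Δ` is not a square in `ℂ[x]`. -/
theorem stmt14 (ψ : Matrix (Fin 2) (Fin 2) (Polynomial ℂ))
    (h11 : ψ 0 0 = 0) (h1221 : ψ 0 1 * ψ 1 0 ≠ 0)
    (hgcd : ∀ g : Polynomial ℂ, g ∣ ψ 0 1 → g ∣ ψ 1 0 → g ∣ ψ 1 1 → IsUnit g) :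
    (IsReduced (Polynomial (Polynomial ℂ) ⧸
        Ideal.span {Polynomial.C (ψ 0 1) * Polynomial.X ^ 2
          + Polynomial.C (ψ 1 1) * Polynomial.X - Polynomial.C (ψ 1 0)})
      ↔ ψ 1 1 ^ 2 + 4 * ψ 0 1 * ψ 1 0 ≠ 0) ∧
    (IsDomain (Polynomial (Polynomial ℂ) ⧸
        Ideal.span {Polynomial.C (ψ 0 1) * Polynomial.X ^ 2
          + Polynomial.C (ψ 1 1) * Polynomial.X - Polynomial.C (ψ 1 0)})
      ↔ ¬ ∃ δ : Polynomial ℂ, ψ 1 1 ^ 2 + 4 * ψ 0 1 * ψ 1 0 = δ ^ 2) :=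
  stmt14_general ψ h1221 hgcd
end

section
/- Let n ≥ 2 and work in the polynomial ring ℂ[x₁,…,x_n, z₁,…,z_n]. Let I be the ideal generated by the monomials x_i z_i z_j for all pairs i ≠ j in {1,…,n}. Then I = ⋂_{i=1}^n (z_j : j ≠ i) ∩ ⋂_{P ⊆ {1,…,n}, |P| ≥ 2} ( (x_i : i ∈ P) + (z_i : i ∈ P^c) ), where P^c denotes the complement of P in {1,…,n}. In particular I is a radical ideal and has exactly 2^n − 1 minimal primes. -/
/-!
All ideals involved are monomial ideals. Index the components by the nonempty `P ⊆ {1,…,n}`,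
the singleton `{k}` standing for the horizontal prime `(z_j : j ≠ k)`. A monomial `x^A z^B` lies
in the component of every singleton iff `|B| ≥ 2`, and then in the component of `P = B` iff
`A ∩ B ≠ ∅`; together this says exactly that some `x_i z_i z_j` with `i ≠ j` divides it, while
each generator of `I` visibly lies in every component. The components are primes generated by
variables, and they form an antichain (the `z_i` in the component of `P` are those with
`i ∉ P`), so they are the `2ⁿ − 1` minimal primes of `I`, and `I`, being their intersection,
is radical.
-/

open MvPolynomial

/-- The ideal of `ℂ[x₁,…,x_n,z₁,…,z_n]` generated by the monomials `x_i z_i z_j`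
for all pairs `i ≠ j`; the variables `x_i` are indexed by `Sum.inl i` and `z_i`
by `Sum.inr i`. -/
noncomputable def diagHiggsIdeal (n : ℕ) : Ideal (MvPolynomial (Fin n ⊕ Fin n) ℂ) :=
  Ideal.span { p | ∃ i j : Fin n, i ≠ j ∧
    p = X (Sum.inl i) * X (Sum.inr i) * X (Sum.inr j) }

namespace MvPolynomial

variable {σ R : Type*}

theorem span_X_image_eq_ker_aeval [CommRing R] (s : Set σ) [DecidablePred (· ∈ s)] :
    Ideal.span (X '' s : Set (MvPolynomial σ R)) =
      RingHom.ker (aeval fun i => (if i ∈ s then 0 else X i : MvPolynomial σ R)) := by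
  refine le_antisymm (Ideal.span_le.2 ?_) fun p hp => ?_
  · rintro _ ⟨i, hi, rfl⟩
    simp [hi]
  · set J := Ideal.span (X '' s : Set (MvPolynomial σ R))
    -- the substitution is the identity modulo `J`
    have hfix : (Ideal.Quotient.mkₐ R J).comp
        (aeval fun i => (if i ∈ s then 0 else X i : MvPolynomial σ R)) =
          Ideal.Quotient.mkₐ R J := by
      refine algHom_ext fun i => ?_
      by_cases hi : i ∈ s
      · have hXi : X i ∈ J := Ideal.subset_span ⟨i, hi, rfl⟩
        simpa [hi] using (Ideal.Quotient.eq_zero_iff_mem.2 hXi).symm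
      · simp [hi]
    rw [← Ideal.Quotient.eq_zero_iff_mem, ← Ideal.Quotient.mkₐ_eq_mk R, ← hfix,
      AlgHom.comp_apply, RingHom.mem_ker.1 hp, map_zero]

theorem isPrime_span_X_image [CommRing R] [IsDomain R] (s : Set σ) :
    (Ideal.span (X '' s : Set (MvPolynomial σ R))).IsPrime := by
  classical
  rw [span_X_image_eq_ker_aeval]
  exact RingHom.ker_isPrime _

theorem X_mem_span_X_image_iff [CommSemiring R] [Nontrivial R] {s : Set σ} {a : σ} :
    (X a : MvPolynomial σ R) ∈ Ideal.span (X '' s) ↔ a ∈ s := by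
  classical
  simp [mem_ideal_span_X_image, support_X, Finsupp.single_apply]

theorem span_X_image_le_span_X_image_iff [CommSemiring R] [Nontrivial R] {s t : Set σ} :
    Ideal.span (X '' s : Set (MvPolynomial σ R)) ≤ Ideal.span (X '' t) ↔ s ⊆ t :=
  ⟨fun h _ ha => X_mem_span_X_image_iff.1 (h (X_mem_span_X_image_iff.2 ha)),
    fun h => Ideal.span_mono (Set.image_mono h)⟩

end MvPolynomial

theorem Ideal.minimalPrimes_eq_image_of_eq_inf {R ι : Type*} [CommRing R] {I : Ideal R}
    {s : Finset ι} {Q : ι → Ideal R} (hQ : ∀ i ∈ s, (Q i).IsPrime)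
    (hanti : IsAntichain (· ≤ ·) (Q '' s)) (hI : I = s.inf Q) :
    I.minimalPrimes = Q '' s := by
  have hle : ∀ i ∈ s, I ≤ Q i := fun i hi => hI ▸ Finset.inf_le hi
  have hcover : ∀ J : Ideal R, J.IsPrime → I ≤ J → ∃ i ∈ s, Q i ≤ J :=
    fun J hJ hIJ => hJ.inf_le'.1 (hI ▸ hIJ)
  ext J
  constructor
  · rintro ⟨⟨hJ, hIJ⟩, hJmin⟩
    obtain ⟨i, hi, hQJ⟩ := hcover J hJ hIJ
    exact ⟨i, hi, le_antisymm hQJ (hJmin ⟨hQ i hi, hle i hi⟩ hQJ)⟩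
  · rintro ⟨i, hi, rfl⟩
    refine ⟨⟨hQ i hi, hle i hi⟩, fun J ⟨hJ, hIJ⟩ hJQ => ?_⟩
    obtain ⟨j, hj, hQJ⟩ := hcover J hJ hIJ
    rwa [← hanti.eq ⟨j, hj, rfl⟩ ⟨i, hi, rfl⟩ (hQJ.trans hJQ)]

open Finset

theorem Finset.inf_univ_erase_empty_eq {ι α : Type*} [Fintype ι] [DecidableEq ι]
    [CompleteLattice α] (f : Finset ι → α) :
    (univ.erase ∅).inf f = (⨅ i, f {i}) ⊓ ⨅ P ∈ {P : Finset ι | 2 ≤ #P}, f P := by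
  simp only [Finset.inf_eq_iInf, mem_erase, mem_univ, and_true, Set.mem_ofPred_eq]
  apply le_antisymm
  · refine le_inf (le_iInf fun i => iInf₂_le {i} (singleton_ne_empty i))
      (le_iInf₂ fun P hP => iInf₂_le P ?_)
    exact nonempty_iff_ne_empty.1 (card_pos.1 (by omega))
  · refine le_iInf₂ fun P hP => ?_
    obtain hP1 | hP2 : #P = 1 ∨ 2 ≤ #P := by
      have := card_pos.2 (nonempty_iff_ne_empty.2 hP); omega
    · obtain ⟨i, rfl⟩ := card_eq_one.1 hP1
      exact inf_le_left.trans (iInf_le _ i)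
    · exact inf_le_right.trans (iInf₂_le P hP2)

section HiggsComponents

variable {n : ℕ}

/-- For `2 ≤ #P` these are the variables of the vertical prime `(x_i : i ∈ P) + (z_i : i ∉ P)`;
for `P = {k}` those of the horizontal prime `(z_j : j ≠ k)`. -/
def higgsComponentVars (P : Finset (Fin n)) : Set (Fin n ⊕ Fin n) :=
  {v | Sum.elim (fun i => i ∈ P ∧ 2 ≤ #P) (· ∉ P) v}

@[simp]
theorem inl_mem_higgsComponentVars {P : Finset (Fin n)} {i : Fin n} :
    Sum.inl i ∈ higgsComponentVars P ↔ i ∈ P ∧ 2 ≤ #P :=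
  Iff.rfl

@[simp]
theorem inr_mem_higgsComponentVars {P : Finset (Fin n)} {i : Fin n} :
    Sum.inr i ∈ higgsComponentVars P ↔ i ∉ P :=
  Iff.rfl

theorem higgsComponentVars_injective : Function.Injective (higgsComponentVars (n := n)) := by
  intro P R h
  ext i
  exact not_iff_not.1 (Iff.of_eq (congrArg (Sum.inr i ∈ ·) h))

theorem eq_of_higgsComponentVars_subset {P R : Finset (Fin n)} (hR : R ≠ ∅)
    (h : higgsComponentVars P ⊆ higgsComponentVars R) : P = R := by
  have hRP : R ⊆ P := fun i hi => by
    by_contra hiP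
    exact (inr_mem_higgsComponentVars.1 (h (inr_mem_higgsComponentVars.2 hiP))) hi
  by_cases hP : 2 ≤ #P
  · exact hRP.antisymm' fun i hi => (inl_mem_higgsComponentVars.1 (h ⟨hi, hP⟩)).1
  · exact (eq_of_subset_of_card_le hRP (by
      have := card_pos.2 (nonempty_iff_ne_empty.2 hR); omega)).symm

theorem exists_inl_inr_inr_of_forall_higgsComponentVars (hn : 0 < n) (m : (Fin n ⊕ Fin n) →₀ ℕ)
    (h : ∀ P : Finset (Fin n), P ≠ ∅ → ∃ v ∈ higgsComponentVars P, m v ≠ 0) :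
    ∃ i j, i ≠ j ∧ m (Sum.inl i) ≠ 0 ∧ m (Sum.inr i) ≠ 0 ∧ m (Sum.inr j) ≠ 0 := by
  classical
  set Z : Finset (Fin n) := univ.filter fun j => m (Sum.inr j) ≠ 0
  have hZ : Z ≠ ∅ := by
    obtain ⟨(i | j), hv, hm⟩ := h {⟨0, hn⟩} (singleton_ne_empty _)
    · simp at hv
    · exact ne_empty_of_mem (a := j) (by simpa [Z] using hm)
  obtain ⟨(i | i), hv, hm⟩ := h Z hZ
  · obtain ⟨hiZ, hcard⟩ := inl_mem_higgsComponentVars.1 hv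
    obtain ⟨j, hjZ, hji⟩ := exists_mem_ne hcard i
    exact ⟨i, j, hji.symm, hm, (mem_filter.1 hiZ).2, (mem_filter.1 hjZ).2⟩
  · exact absurd (by simpa [Z] using hm) (inr_mem_higgsComponentVars.1 hv)

noncomputable def higgsComponent (P : Finset (Fin n)) : Ideal (MvPolynomial (Fin n ⊕ Fin n) ℂ) :=
  Ideal.span (X '' higgsComponentVars P)

theorem isPrime_higgsComponent (P : Finset (Fin n)) : (higgsComponent P).IsPrime :=
  isPrime_span_X_image _

theorem higgsComponent_injective : Function.Injective (higgsComponent (n := n)) :=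
  fun _ _ h => higgsComponentVars_injective
    ((span_X_image_le_span_X_image_iff.1 h.le).antisymm (span_X_image_le_span_X_image_iff.1 h.ge))

theorem isAntichain_higgsComponent :
    IsAntichain (· ≤ ·)
      (higgsComponent '' ((univ.erase ∅ : Finset (Finset (Fin n))) : Set (Finset (Fin n)))) := by
  rintro _ ⟨P, -, rfl⟩ _ ⟨R, hR, rfl⟩ hne hle
  exact hne (congrArg _ (eq_of_higgsComponentVars_subset (mem_erase.1 hR).1
    (span_X_image_le_span_X_image_iff.1 hle)))

theorem diagHiggsIdeal_le_higgsComponent (P : Finset (Fin n)) :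
    diagHiggsIdeal n ≤ higgsComponent P := by
  rw [diagHiggsIdeal, Ideal.span_le]
  rintro _ ⟨i, j, hij, rfl⟩
  have hvar : ∀ v ∈ higgsComponentVars P, (X v : MvPolynomial _ ℂ) ∈ higgsComponent P :=
    fun v hv => Ideal.subset_span ⟨v, hv, rfl⟩
  by_cases hi : i ∈ P
  · by_cases hj : j ∈ P
    · have hP : 2 ≤ #P := one_lt_card.2 ⟨i, hi, j, hj, hij⟩
      exact Ideal.mul_mem_right _ _ (Ideal.mul_mem_right _ _ (hvar _ ⟨hi, hP⟩))
    · exact Ideal.mul_mem_left _ _ (hvar _ hj)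
  · exact Ideal.mul_mem_right _ _ (Ideal.mul_mem_left _ _ (hvar _ hi))

theorem mem_diagHiggsIdeal_of_forall_support {p : MvPolynomial (Fin n ⊕ Fin n) ℂ}
    (h : ∀ m ∈ p.support, ∃ i j, i ≠ j ∧
      m (Sum.inl i) ≠ 0 ∧ m (Sum.inr i) ≠ 0 ∧ m (Sum.inr j) ≠ 0) :
    p ∈ diagHiggsIdeal n := by
  classical
  let D : Set ((Fin n ⊕ Fin n) →₀ ℕ) := {d | ∃ i j : Fin n, i ≠ j ∧ d =
    Finsupp.single (Sum.inl i) 1 + Finsupp.single (Sum.inr i) 1 + Finsupp.single (Sum.inr j) 1}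
  have hD : (fun d => monomial d (1 : ℂ)) '' D ⊆ {p | ∃ i j : Fin n, i ≠ j ∧
      p = X (Sum.inl i) * X (Sum.inr i) * X (Sum.inr j)} := by
    rintro _ ⟨_, ⟨i, j, hij, rfl⟩, rfl⟩
    exact ⟨i, j, hij, by simp only [X, monomial_mul, one_mul]⟩
  refine Ideal.span_mono hD (mem_ideal_span_monomial_image.2 fun m hm => ?_)
  obtain ⟨i, j, hij, hxi, hzi, hzj⟩ := h m hm
  refine ⟨_, ⟨i, j, hij, rfl⟩, fun v => ?_⟩
  rcases v with v | v <;> simp only [Finsupp.add_apply, Finsupp.single_apply] <;> split_ifs <;>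
    simp_all <;> omega

theorem diagHiggsIdeal_eq_inf_higgsComponent (hn : 0 < n) :
    diagHiggsIdeal n = (univ.erase ∅).inf higgsComponent := by
  refine le_antisymm (Finset.le_inf fun P _ => diagHiggsIdeal_le_higgsComponent P)
    fun p hp => mem_diagHiggsIdeal_of_forall_support fun m hm => ?_
  refine exists_inl_inr_inr_of_forall_higgsComponentVars hn m fun P hP => ?_
  have hpP : p ∈ higgsComponent P :=
    Finset.inf_le (f := higgsComponent) (mem_erase.2 ⟨hP, mem_univ P⟩) hp
  exact mem_ideal_span_X_image.1 hpP m hm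

theorem span_X_inr_ne_eq_higgsComponent_singleton (i : Fin n) :
    Ideal.span {p : MvPolynomial (Fin n ⊕ Fin n) ℂ | ∃ j : Fin n, j ≠ i ∧ p = X (Sum.inr j)} =
      higgsComponent {i} := by
  refine congrArg Ideal.span (Set.ext fun p => ⟨?_, ?_⟩)
  · rintro ⟨j, hj, rfl⟩
    exact ⟨Sum.inr j, by simpa using hj, rfl⟩
  · rintro ⟨(j | j), hj, rfl⟩
    · simp at hj
    · exact ⟨j, by simpa using hj, rfl⟩

theorem span_X_inl_add_span_X_inr_eq_higgsComponent {P : Finset (Fin n)} (hP : 2 ≤ #P) :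
    Ideal.span {p : MvPolynomial (Fin n ⊕ Fin n) ℂ | ∃ i ∈ P, p = X (Sum.inl i)} +
      Ideal.span {p | ∃ i ∉ P, p = X (Sum.inr i)} = higgsComponent P := by
  rw [Submodule.add_eq_sup, ← Ideal.span_union]
  refine congrArg Ideal.span (Set.ext fun p => ⟨?_, ?_⟩)
  · rintro (⟨i, hi, rfl⟩ | ⟨i, hi, rfl⟩)
    · exact ⟨Sum.inl i, ⟨hi, hP⟩, rfl⟩
    · exact ⟨Sum.inr i, hi, rfl⟩
  · rintro ⟨(i | i), hi, rfl⟩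
    · exact Or.inl ⟨i, hi.1, rfl⟩
    · exact Or.inr ⟨i, hi, rfl⟩

end HiggsComponents

/-- The minimal-prime decomposition of the ideal of the rank-1 Higgs Grassmannian of
the diagonal Higgs field `diag(x₁dx₁,…,x_ndx_n)` on affine `n`-space: it is the
intersection of the `n` "horizontal" primes `(z_j : j ≠ i)` and the "vertical" primes
`(x_i : i ∈ P) + (z_i : i ∈ Pᶜ)` for all subsets `P` with at least two elements; in
particular the ideal is radical and has exactly `2ⁿ − 1` minimal primes. -/
theorem stmt16 (n : ℕ) (hn : 2 ≤ n) :
    diagHiggsIdeal n =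
      (⨅ i : Fin n,
        Ideal.span { p : MvPolynomial (Fin n ⊕ Fin n) ℂ | ∃ j : Fin n, j ≠ i ∧
          p = X (Sum.inr j) }) ⊓
      (⨅ P ∈ {P : Finset (Fin n) | 2 ≤ P.card},
        Ideal.span { p : MvPolynomial (Fin n ⊕ Fin n) ℂ | ∃ i ∈ P, p = X (Sum.inl i) } +
        Ideal.span { p : MvPolynomial (Fin n ⊕ Fin n) ℂ | ∃ i ∉ P, p = X (Sum.inr i) }) ∧
    (diagHiggsIdeal n).radical = diagHiggsIdeal n ∧
    (diagHiggsIdeal n).minimalPrimes.ncard = 2 ^ n - 1 := by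
  have hdecomp := diagHiggsIdeal_eq_inf_higgsComponent (n := n) (by omega)
  have hmin :=
    Ideal.minimalPrimes_eq_image_of_eq_inf (fun P _ => isPrime_higgsComponent P)
      isAntichain_higgsComponent hdecomp
  refine ⟨?_, ?_, ?_⟩
  · rw [hdecomp, Finset.inf_univ_erase_empty_eq]
    congr 1
    · exact iInf_congr fun i => (span_X_inr_ne_eq_higgsComponent_singleton i).symm
    · exact iInf_congr fun P => iInf_congr fun hP =>
        (span_X_inl_add_span_X_inr_eq_higgsComponent hP).symm
  · rw [← Ideal.sInf_minimalPrimes, hmin, sInf_image]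
    simp only [Finset.mem_coe, ← Finset.inf_eq_iInf, ← hdecomp]
  · rw [hmin, Set.ncard_image_of_injective _ higgsComponent_injective, Set.ncard_coe_finset,
      card_erase_of_mem (mem_univ _), card_univ, Fintype.card_finset, Fintype.card_fin]
end
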